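/- arXiv:1904.04401 — 2 statements merged into one kernel-verified Lean document; each statement's English description precedes it below -/
import Mathlib

section
/- The map sending Z(k) to V(k) for k ≤ n is a bijection between the constituents of Z(n) and the constituents of V(n), and it preserves and reflects constituency: Z(j) ◁ Z(k) iff V(j) ◁ V(k). -/
/-- Constituency on well-founded pure sets: x ◁ y iff x = y or x ◁ z for some z ∈ y. -/
inductive Constituent : ZFSet → ZFSet → Prop
  | refl (x : ZFSet) : Constituent x x
  | mem {x z y : ZFSet} : Constituent x z → z ∈ y → Constituent x y

/-- Zermelo encoding of the naturals. -/
def Z : ℕ → ZFSet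
  | 0 => ∅
  | n + 1 => {Z n}

/-- von Neumann encoding of the naturals. -/
def V : ℕ → ZFSet
  | 0 => ∅
  | n + 1 => insert (V n) (V n)

lemma Z_inj : Function.Injective Z := by
  intro m
  induction m with
  | zero =>
    intro n h
    cases n with
    | zero => rfl
    | succ n =>
      exfalso
      have : Z n ∈ (∅ : ZFSet) := by
        rw [show (∅ : ZFSet) = Z (n+1) from h, Z]; simp
      exact ZFSet.notMem_empty _ this
  | succ m ih =>
    intro n h
    cases n with
    | zero =>
      exfalso
      have : Z m ∈ (∅ : ZFSet) := by
        rw [← show Z (m+1) = ∅ from h, Z]; simp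
      exact ZFSet.notMem_empty _ this
    | succ n =>
      have : Z m = Z n := by
        have hm : Z m ∈ Z (n+1) := by rw [← h, Z]; simp
        rw [Z] at hm; simpa using hm
      rw [ih this]

lemma mem_V {x : ZFSet} {n : ℕ} : x ∈ V n ↔ ∃ k < n, x = V k := by
  induction n with
  | zero => simp [V, ZFSet.notMem_empty]
  | succ n ih =>
    rw [V]
    simp only [ZFSet.mem_insert_iff, ih]
    constructor
    · rintro (rfl | ⟨k, hk, rfl⟩)
      · exact ⟨n, by omega, rfl⟩
      · exact ⟨k, by omega, rfl⟩
    · rintro ⟨k, hk, rfl⟩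
      rcases Nat.lt_succ_iff_lt_or_eq.mp hk with h | rfl
      · exact Or.inr ⟨k, h, rfl⟩
      · exact Or.inl rfl

lemma V_mem_of_lt {m n : ℕ} (h : m < n) : V m ∈ V n := mem_V.mpr ⟨m, h, rfl⟩

lemma V_inj : Function.Injective V := by
  intro m n h
  by_contra hne
  rcases Nat.lt_or_ge m n with hlt | hge
  · exact ZFSet.mem_irrefl (V n) (by nth_rewrite 2 [← h]; exact V_mem_of_lt hlt)
  · have hlt : n < m := lt_of_le_of_ne hge (Ne.symm hne)
    exact ZFSet.mem_irrefl (V m) (by nth_rewrite 2 [h]; exact V_mem_of_lt hlt)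

lemma const_Z {x : ZFSet} {n : ℕ} (h : Constituent x (Z n)) : ∃ k ≤ n, x = Z k := by
  induction n with
  | zero =>
    cases h with
    | refl => exact ⟨0, le_refl _, rfl⟩
    | mem h hz => exact absurd hz (ZFSet.notMem_empty _)
  | succ n ih =>
    cases h with
    | refl => exact ⟨n+1, le_refl _, rfl⟩
    | mem h hz =>
      rw [Z] at hz
      rw [ZFSet.mem_singleton] at hz
      subst hz
      obtain ⟨k, hk, rfl⟩ := ih h
      exact ⟨k, by omega, rfl⟩

lemma const_V {x : ZFSet} {n : ℕ} (h : Constituent x (V n)) : ∃ k ≤ n, x = V k := by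
  induction n using Nat.strong_induction_on with
  | _ n ih =>
    cases h with
    | refl => exact ⟨n, le_refl _, rfl⟩
    | mem h hz =>
      obtain ⟨m, hm, rfl⟩ := mem_V.mp hz
      obtain ⟨k, hk, rfl⟩ := ih m hm h
      exact ⟨k, by omega, rfl⟩

lemma const_Z_of_le {j k : ℕ} (h : j ≤ k) : Constituent (Z j) (Z k) := by
  induction k with
  | zero => rw [Nat.le_zero.mp h]; exact Constituent.refl _
  | succ k ih =>
    rcases Nat.le_succ_iff.mp h with h' | rfl
    · exact Constituent.mem (ih h') (by rw [Z]; simp)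
    · exact Constituent.refl _

lemma const_V_of_le {j k : ℕ} (h : j ≤ k) : Constituent (V j) (V k) := by
  induction k with
  | zero => rw [Nat.le_zero.mp h]; exact Constituent.refl _
  | succ k ih =>
    rcases Nat.le_succ_iff.mp h with h' | rfl
    · exact Constituent.mem (ih h') (V_mem_of_lt (Nat.lt_succ_self _))
    · exact Constituent.refl _

lemma const_ZZ {j k : ℕ} : Constituent (Z j) (Z k) ↔ j ≤ k := by
  constructor
  · intro h
    obtain ⟨m, hm, hmeq⟩ := const_Z h
    rw [Z_inj hmeq]; exact hm
  · exact const_Z_of_le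

lemma const_VV {j k : ℕ} : Constituent (V j) (V k) ↔ j ≤ k := by
  constructor
  · intro h
    obtain ⟨m, hm, hmeq⟩ := const_V h
    rw [V_inj hmeq]; exact hm
  · exact const_V_of_le

open Classical in
noncomputable def zvf : ZFSet.{u} → ZFSet.{v} := fun x =>
  if h : ∃ k, Z k = x then V h.choose else V 0

open Classical in
lemma zvf_Z (k : ℕ) : zvf (Z k) = V k := by
  unfold zvf
  have h : ∃ m, Z m = Z k := ⟨k, rfl⟩
  rw [dif_pos h, Z_inj h.choose_spec]

theorem zermelo_vonNeumann_constituent_iso : ∀ n : ℕ,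
    ∃ f : ZFSet → ZFSet,
      (∀ k ≤ n, f (Z k) = V k) ∧
      Set.BijOn f {x | Constituent x (Z n)} {x | Constituent x (V n)} ∧
      (∀ a b : ZFSet, Constituent a (Z n) → Constituent b (Z n) →
        (Constituent a b ↔ Constituent (f a) (f b))) ∧
      (∀ j k : ℕ, Constituent (Z j) (Z k) ↔ Constituent (V j) (V k)) := by
  intro n
  refine ⟨zvf, fun k _ => zvf_Z k, ⟨?_, ?_, ?_⟩, ?_, ?_⟩
  · rintro x hx
    obtain ⟨k, hk, rfl⟩ := const_Z hx
    rw [Set.mem_setOf_eq, zvf_Z]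
    exact const_V_of_le hk
  · rintro x hx y hy hxy
    obtain ⟨j, hj, rfl⟩ := const_Z hx
    obtain ⟨k, hk, rfl⟩ := const_Z hy
    rw [zvf_Z, zvf_Z] at hxy
    rw [V_inj hxy]
  · rintro y hy
    obtain ⟨k, hk, rfl⟩ := const_V hy
    exact ⟨Z k, const_Z_of_le hk, zvf_Z k⟩
  · intro a b ha hb
    obtain ⟨j, hj, rfl⟩ := const_Z ha
    obtain ⟨k, hk, rfl⟩ := const_Z hb
    rw [zvf_Z, zvf_Z, const_ZZ, const_VV]
  · intro j k
    rw [const_ZZ, const_VV]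
end

section
/- The constituent replacement operation applied with the empty set, x(y) (replace every occurrence of ∅ in x by y), is associative: x(y(z)) = x(y)(z), has ∅ as two-sided identity (x(∅) = x and ∅(x) = x), and satisfies y ◁ x(y). -/
open Classical in
/-- `subst y x` is x(y): replace every occurrence of ∅ inside x by y.
∅(y) = y, and {a₁,…,aₖ}(y) = {a₁(y),…,aₖ(y)} for nonempty x. -/
noncomputable def subst (y : ZFSet) : ZFSet → ZFSet :=
  ZFSet.mem_wf.fix fun x ih =>
    if x = ∅ then y
    else
      letI : ZFSet.Definable₁ (fun z => if h : z ∈ x then ih z h else ∅) :=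
        Classical.allZFSetDefinable _
      ZFSet.image (fun z => if h : z ∈ x then ih z h else ∅) x
open Classical in
lemma subst_eq (y x : ZFSet) : subst y x =
    if x = ∅ then y else
      letI : ZFSet.Definable₁ (fun z => if h : z ∈ x then subst y z else ∅) :=
        Classical.allZFSetDefinable _
      ZFSet.image (fun z => if h : z ∈ x then subst y z else ∅) x := by
  rw [subst, ZFSet.mem_wf.fix_eq]

lemma subst_empty (y : ZFSet) : subst y ∅ = y := by rw [subst_eq]; simp

open Classical in
lemma mem_subst {x : ZFSet} (hx : x ≠ ∅) (y w : ZFSet) :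
    w ∈ subst y x ↔ ∃ a ∈ x, subst y a = w := by
  rw [subst_eq, if_neg hx]
  letI : ZFSet.Definable₁ (fun z => if h : z ∈ x then subst y z else ∅) :=
    Classical.allZFSetDefinable _
  rw [ZFSet.mem_image]
  constructor
  · rintro ⟨a, ha, rfl⟩; exact ⟨a, ha, by simp [ha]⟩
  · rintro ⟨a, ha, rfl⟩; exact ⟨a, ha, by simp [ha]⟩

lemma subst_id (x : ZFSet) : subst ∅ x = x := by
  induction x using ZFSet.inductionOn with
  | _ x ih =>
    by_cases hx : x = ∅
    · simp [hx, subst_empty]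
    · ext w
      rw [mem_subst hx]
      constructor
      · rintro ⟨a, ha, rfl⟩; rwa [ih a ha]
      · intro hw; exact ⟨w, hw, ih w hw⟩

lemma subst_ne_empty {y x : ZFSet} (hx : x ≠ ∅) (hy : y ≠ ∅ ∨ True) : subst y x ≠ ∅ := by
  obtain ⟨a, ha⟩ : ∃ a, a ∈ x := by
    by_contra h; push_neg at h; exact hx (ZFSet.eq_empty x |>.mpr h)
  intro h
  have : subst y a ∈ subst y x := (mem_subst hx y _).mpr ⟨a, ha, rfl⟩
  rw [h] at this; exact ZFSet.notMem_empty _ this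

lemma subst_assoc (x y z : ZFSet) : subst (subst z y) x = subst z (subst y x) := by
  induction x using ZFSet.inductionOn with
  | _ x ih =>
    by_cases hx : x = ∅
    · rw [hx, subst_empty, subst_empty]
    · have hyx : subst y x ≠ ∅ := subst_ne_empty hx (Or.inr trivial)
      ext w
      rw [mem_subst hx, mem_subst hyx]
      constructor
      · rintro ⟨a, ha, rfl⟩
        exact ⟨subst y a, (mem_subst hx y _).mpr ⟨a, ha, rfl⟩, (ih a ha).symm⟩
      · rintro ⟨b, hb, rfl⟩
        obtain ⟨a, ha, rfl⟩ := (mem_subst hx y _).mp hb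
        exact ⟨a, ha, ih a ha⟩

lemma constituent_subst (x y : ZFSet) : Constituent y (subst y x) := by
  induction x using ZFSet.inductionOn with
  | _ x ih =>
    by_cases hx : x = ∅
    · rw [hx, subst_empty]; exact Constituent.refl y
    · obtain ⟨a, ha⟩ : ∃ a, a ∈ x := by
        by_contra h; push_neg at h; exact hx (ZFSet.eq_empty x |>.mpr h)
      exact Constituent.mem (ih a ha) ((mem_subst hx y _).mpr ⟨a, ha, rfl⟩)

theorem subst_assoc_id_constituent :
    (∀ x y z : ZFSet, subst (subst z y) x = subst z (subst y x)) ∧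
    (∀ x : ZFSet, subst ∅ x = x) ∧
    (∀ x : ZFSet, subst x ∅ = x) ∧
    (∀ x y : ZFSet, Constituent y (subst y x)) :=
  ⟨subst_assoc, subst_id, subst_empty, constituent_subst⟩
end
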